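/- Let ψ₁, ψ₂ : ℂ → ℂ be smooth solutions of the Dirac system ∂ψ₁ = pψ₂, ∂̄ψ₂ = −pψ₁ with smooth real potential p, let q = |ψ₁|² + |ψ₂|², H = p/q and Q = 2(ψ₂∂ψ̄₁ − ψ̄₁∂ψ₂). Then on the open set where q ≠ 0 the Codazzi equation ∂̄Q = 2q²·∂H holds. -/

import Mathlib

open Complex ComplexConjugate

/-- Wirtinger derivative ∂ = (∂ₓ - i∂_y)/2. -/
noncomputable def wd (f : ℂ → ℂ) (z : ℂ) : ℂ :=
  (fderiv ℝ f z 1 - Complex.I * fderiv ℝ f z Complex.I) / 2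

/-- Wirtinger derivative ∂̄ = (∂ₓ + i∂_y)/2. -/
noncomputable def wdb (f : ℂ → ℂ) (z : ℂ) : ℂ :=
  (fderiv ℝ f z 1 + Complex.I * fderiv ℝ f z Complex.I) / 2


lemma wd_congr {f g : ℂ → ℂ} {z : ℂ} (h : f =ᶠ[nhds z] g) : wd f z = wd g z := by
  unfold wd; rw [h.fderiv_eq]

lemma wd_mul {f g : ℂ → ℂ} {z : ℂ} (hf : DifferentiableAt ℝ f z)
    (hg : DifferentiableAt ℝ g z) :
    wd (fun w => f w * g w) z = wd f z * g z + f z * wd g z := by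
  unfold wd
  rw [fderiv_fun_mul hf hg]
  simp only [ContinuousLinearMap.add_apply, ContinuousLinearMap.smul_apply, smul_eq_mul]
  ring

lemma wdb_mul {f g : ℂ → ℂ} {z : ℂ} (hf : DifferentiableAt ℝ f z)
    (hg : DifferentiableAt ℝ g z) :
    wdb (fun w => f w * g w) z = wdb f z * g z + f z * wdb g z := by
  unfold wdb
  rw [fderiv_fun_mul hf hg]
  simp only [ContinuousLinearMap.add_apply, ContinuousLinearMap.smul_apply, smul_eq_mul]
  ring

lemma wd_add {f g : ℂ → ℂ} {z : ℂ} (hf : DifferentiableAt ℝ f z)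
    (hg : DifferentiableAt ℝ g z) :
    wd (fun w => f w + g w) z = wd f z + wd g z := by
  unfold wd
  rw [fderiv_fun_add hf hg]
  simp only [ContinuousLinearMap.add_apply]
  ring

lemma wdb_sub {f g : ℂ → ℂ} {z : ℂ} (hf : DifferentiableAt ℝ f z)
    (hg : DifferentiableAt ℝ g z) :
    wdb (fun w => f w - g w) z = wdb f z - wdb g z := by
  unfold wdb
  rw [fderiv_fun_sub hf hg]
  simp only [ContinuousLinearMap.sub_apply]
  ring

lemma wdb_const_mul {f : ℂ → ℂ} {z : ℂ} (c : ℂ) (hf : DifferentiableAt ℝ f z) :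
    wdb (fun w => c * f w) z = c * wdb f z := by
  unfold wdb
  rw [fderiv_const_mul hf]
  simp only [ContinuousLinearMap.smul_apply, smul_eq_mul]
  ring

lemma wd_neg {f : ℂ → ℂ} {z : ℂ} :
    wd (fun w => -f w) z = -wd f z := by
  unfold wd
  rw [fderiv_fun_neg]
  simp only [ContinuousLinearMap.neg_apply]
  ring

lemma fderiv_conj_comp (f : ℂ → ℂ) {z : ℂ} (hf : DifferentiableAt ℝ f z) (v : ℂ) :
    fderiv ℝ (fun w => conj (f w)) z v = conj (fderiv ℝ f z v) := by
  have h := (Complex.conjCLE.toContinuousLinearMap.hasFDerivAt (x := f z)).comp z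
    hf.hasFDerivAt
  have he : (fun w => conj (f w)) = ⇑Complex.conjCLE.toContinuousLinearMap ∘ f := rfl
  rw [he, h.fderiv]
  simp [Complex.conjCLE]

lemma wd_conj {f : ℂ → ℂ} {z : ℂ} (hf : DifferentiableAt ℝ f z) :
    wd (fun w => conj (f w)) z = conj (wdb f z) := by
  unfold wd wdb
  rw [fderiv_conj_comp f hf, fderiv_conj_comp f hf]
  rw [map_div₀, map_add, map_mul]
  simp only [Complex.conj_I, map_ofNat]
  ring

lemma wdb_conj {f : ℂ → ℂ} {z : ℂ} (hf : DifferentiableAt ℝ f z) :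
    wdb (fun w => conj (f w)) z = conj (wd f z) := by
  unfold wd wdb
  rw [fderiv_conj_comp f hf, fderiv_conj_comp f hf]
  rw [map_div₀, map_sub, map_mul]
  simp only [Complex.conj_I, map_ofNat]
  ring

lemma contDiff_wd {f : ℂ → ℂ} (hf : ContDiff ℝ (⊤ : ℕ∞) f) : ContDiff ℝ (⊤ : ℕ∞) (wd f) := by
  have h := hf.fderiv_right (m := (⊤ : ℕ∞)) (by simp)
  have h1 : ContDiff ℝ (⊤ : ℕ∞) (fun w => fderiv ℝ f w 1) := h.clm_apply contDiff_const
  have hI : ContDiff ℝ (⊤ : ℕ∞) (fun w => fderiv ℝ f w Complex.I) := h.clm_apply contDiff_const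
  exact ((h1.sub (contDiff_const.mul hI)).div_const 2)

lemma contDiff_wdb {f : ℂ → ℂ} (hf : ContDiff ℝ (⊤ : ℕ∞) f) : ContDiff ℝ (⊤ : ℕ∞) (wdb f) := by
  have h := hf.fderiv_right (m := (⊤ : ℕ∞)) (by simp)
  have h1 : ContDiff ℝ (⊤ : ℕ∞) (fun w => fderiv ℝ f w 1) := h.clm_apply contDiff_const
  have hI : ContDiff ℝ (⊤ : ℕ∞) (fun w => fderiv ℝ f w Complex.I) := h.clm_apply contDiff_const
  exact ((h1.add (contDiff_const.mul hI)).div_const 2)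

lemma fderiv_fderiv_apply {f : ℂ → ℂ} (hf : ContDiff ℝ (⊤ : ℕ∞) f) (z v u : ℂ) :
    fderiv ℝ (fun w => fderiv ℝ f w v) z u = fderiv ℝ (fderiv ℝ f) z u v := by
  have hd : DifferentiableAt ℝ (fderiv ℝ f) z :=
    ((hf.fderiv_right (m := (⊤ : ℕ∞)) (by simp)).differentiable (by simp)) z
  rw [fderiv_clm_apply hd (differentiableAt_const v)]
  simp

lemma wd_wdb_comm {f : ℂ → ℂ} (hf : ContDiff ℝ (⊤ : ℕ∞) f) (z : ℂ) :
    wdb (wd f) z = wd (wdb f) z := by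
  have hsymm : IsSymmSndFDerivAt ℝ f z :=
    (hf.contDiffAt).isSymmSndFDerivAt
      (by rw [minSmoothness_of_isRCLikeNormedField]; exact WithTop.coe_le_coe.mpr le_top)
  have hd : DifferentiableAt ℝ (fderiv ℝ f) z :=
    ((hf.fderiv_right (m := (⊤ : ℕ∞)) (by simp)).differentiable (by simp)) z
  have h1 : DifferentiableAt ℝ (fun w => fderiv ℝ f w 1) z :=
    hd.clm_apply (differentiableAt_const _)
  have hI : DifferentiableAt ℝ (fun w => fderiv ℝ f w Complex.I) z :=
    hd.clm_apply (differentiableAt_const _)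
  have expand : ∀ v : ℂ, fderiv ℝ (wd f) z v
      = (fderiv ℝ (fderiv ℝ f) z v 1 - Complex.I * fderiv ℝ (fderiv ℝ f) z v Complex.I) / 2 := by
    intro v
    have hwd : wd f = fun w => (2⁻¹ : ℂ) * (fderiv ℝ f w 1 - Complex.I * fderiv ℝ f w Complex.I) := by
      funext w; simp only [wd]; ring
    rw [hwd, fderiv_const_mul (h1.fun_sub (hI.const_mul _)), fderiv_fun_sub h1 (hI.const_mul _),
      fderiv_const_mul hI]
    simp only [ContinuousLinearMap.smul_apply, ContinuousLinearMap.sub_apply, smul_eq_mul]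
    rw [fderiv_fderiv_apply hf, fderiv_fderiv_apply hf]
    ring
  have expandb : ∀ v : ℂ, fderiv ℝ (wdb f) z v
      = (fderiv ℝ (fderiv ℝ f) z v 1 + Complex.I * fderiv ℝ (fderiv ℝ f) z v Complex.I) / 2 := by
    intro v
    have hwd : wdb f = fun w => (2⁻¹ : ℂ) * (fderiv ℝ f w 1 + Complex.I * fderiv ℝ f w Complex.I) := by
      funext w; simp only [wdb]; ring
    rw [hwd, fderiv_const_mul (h1.fun_add (hI.const_mul _)), fderiv_fun_add h1 (hI.const_mul _),
      fderiv_const_mul hI]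
    simp only [ContinuousLinearMap.smul_apply, ContinuousLinearMap.add_apply, smul_eq_mul]
    rw [fderiv_fderiv_apply hf, fderiv_fderiv_apply hf]
    ring
  have hs := hsymm.eq 1 Complex.I
  show (fderiv ℝ (wd f) z 1 + Complex.I * fderiv ℝ (wd f) z Complex.I) / 2 =
    (fderiv ℝ (wdb f) z 1 - Complex.I * fderiv ℝ (wdb f) z Complex.I) / 2
  rw [expand, expand, expandb, expandb]
  linear_combination (-(Complex.I) / 2) * hs
theorem stmt_6 (ψ₁ ψ₂ : ℂ → ℂ) (p : ℂ → ℝ)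
    (hψ₁ : ContDiff ℝ (⊤ : ℕ∞) ψ₁) (hψ₂ : ContDiff ℝ (⊤ : ℕ∞) ψ₂) (hp : ContDiff ℝ (⊤ : ℕ∞) p)
    (hD₁ : ∀ z, wd ψ₁ z = (p z : ℂ) * ψ₂ z)
    (hD₂ : ∀ z, wdb ψ₂ z = -(p z : ℂ) * ψ₁ z)
    (q : ℂ → ℝ) (hq : ∀ z, q z = ‖ψ₁ z‖ ^ 2 + ‖ψ₂ z‖ ^ 2)
    (H : ℂ → ℝ) (hH : ∀ z, H z = p z / q z)
    (Q : ℂ → ℂ)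
    (hQdef : ∀ z, Q z = 2 * (ψ₂ z * wd (fun w => conj (ψ₁ w)) z -
      conj (ψ₁ z) * wd ψ₂ z)) :
    ∀ z, q z ≠ 0 → wdb Q z = 2 * ((q z : ℂ)) ^ 2 * wd (fun w => (H w : ℂ)) z := by
  have hψ₁c : ContDiff ℝ (⊤ : ℕ∞) (fun w => conj (ψ₁ w)) :=
    Complex.conjCLE.toContinuousLinearMap.contDiff.comp hψ₁
  have hψ₂c : ContDiff ℝ (⊤ : ℕ∞) (fun w => conj (ψ₂ w)) :=
    Complex.conjCLE.toContinuousLinearMap.contDiff.comp hψ₂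
  have hPc : ContDiff ℝ (⊤ : ℕ∞) (fun w => ((p w : ℝ) : ℂ)) :=
    Complex.ofRealCLM.contDiff.comp hp
  have dψ₁ : ∀ w, DifferentiableAt ℝ ψ₁ w := fun w => (hψ₁.differentiable (by simp)) w
  have dψ₂ : ∀ w, DifferentiableAt ℝ ψ₂ w := fun w => (hψ₂.differentiable (by simp)) w
  have dψ₂c : ∀ w, DifferentiableAt ℝ (fun u => conj (ψ₂ u)) w :=
    fun w => (hψ₂c.differentiable (by simp)) w
  have dPc : ∀ w, DifferentiableAt ℝ (fun u => ((p u : ℝ) : ℂ)) w :=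
    fun w => (hPc.differentiable (by simp)) w
  have hwdψ₁c : ContDiff ℝ (⊤ : ℕ∞) (wd (fun w => conj (ψ₁ w))) := contDiff_wd hψ₁c
  have hwdψ₂ : ContDiff ℝ (⊤ : ℕ∞) (wd ψ₂) := contDiff_wd hψ₂
  have hwdbψ₁ : ContDiff ℝ (⊤ : ℕ∞) (wdb ψ₁) := contDiff_wdb hψ₁
  have F3fun : wd (fun w => conj (ψ₁ w)) = fun w => conj (wdb ψ₁ w) :=
    funext fun w => wd_conj (dψ₁ w)
  -- the potential function, complex-valued
  have hDp : ∀ w, wd (fun u => ((p u : ℝ) : ℂ)) w = conj (wdb (fun u => ((p u : ℝ) : ℂ)) w) := by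
    intro w
    have hre : (fun u => ((p u : ℝ) : ℂ)) = fun u => conj (((p u : ℝ) : ℂ)) := by
      funext u; rw [Complex.conj_ofReal]
    conv_lhs => rw [hre]
    exact wd_conj (dPc w)
  -- q as a complex-valued function
  have hQceq : (fun w => ((q w : ℝ) : ℂ))
      = fun w => ψ₁ w * conj (ψ₁ w) + ψ₂ w * conj (ψ₂ w) := by
    funext w
    rw [hq w, Complex.mul_conj, Complex.mul_conj]
    push_cast [← Complex.sq_norm]
    ring
  have hQc : ContDiff ℝ (⊤ : ℕ∞) (fun w => ((q w : ℝ) : ℂ)) := by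
    rw [hQceq]; exact (hψ₁.mul hψ₁c).add (hψ₂.mul hψ₂c)
  have dQc : ∀ w, DifferentiableAt ℝ (fun u => ((q u : ℝ) : ℂ)) w :=
    fun w => (hQc.differentiable (by simp)) w
  have hqcont : Continuous q := by
    have : q = fun w => ‖ψ₁ w‖ ^ 2 + ‖ψ₂ w‖ ^ 2 := funext hq
    rw [this]
    exact ((continuous_norm.comp hψ₁.continuous).pow 2).add
      ((continuous_norm.comp hψ₂.continuous).pow 2)
  intro z hqz
  -- second-order identities
  have h1 : wdb (wd (fun u => conj (ψ₁ u))) z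
      = wd (fun u => ((p u : ℝ) : ℂ)) z * conj (ψ₂ z) - ((p z : ℂ))^2 * conj (ψ₁ z) := by
    rw [F3fun, wdb_conj ((hwdbψ₁.differentiable (by simp)) z), ← wd_wdb_comm hψ₁ z]
    have hw1 : wd ψ₁ = fun w => ((p w : ℝ) : ℂ) * ψ₂ w := funext hD₁
    rw [hw1, wdb_mul (dPc z) (dψ₂ z), hD₂ z, hDp z]
    simp only [map_add, map_mul, map_neg, Complex.conj_ofReal, Complex.conj_conj]
    ring
  have h2 : wdb (wd ψ₂) z
      = -(wd (fun u => ((p u : ℝ) : ℂ)) z * ψ₁ z + ((p z : ℂ))^2 * ψ₂ z) := by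
    rw [wd_wdb_comm hψ₂ z]
    have hw2 : wdb ψ₂ = fun w => -(((p w : ℝ) : ℂ) * ψ₁ w) := by
      funext w; rw [hD₂ w]; ring
    rw [hw2, wd_neg, wd_mul (dPc z) (dψ₁ z), hD₁ z]
    ring
  have h3 : wdb (fun u => conj (ψ₁ u)) z = ((p z : ℂ)) * conj (ψ₂ z) := by
    rw [wdb_conj (dψ₁ z), hD₁ z]
    simp only [map_mul, Complex.conj_ofReal]
  -- derivative of q
  have hwq : wd (fun u => ((q u : ℝ) : ℂ)) z
      = ψ₁ z * conj (wdb ψ₁ z) + wd ψ₂ z * conj (ψ₂ z) := by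
    rw [hQceq]
    rw [wd_add ((dψ₁ z).fun_mul ((hψ₁c.differentiable (by simp)) z))
      ((dψ₂ z).fun_mul (dψ₂c z))]
    rw [wd_mul (dψ₁ z) ((hψ₁c.differentiable (by simp)) z), wd_mul (dψ₂ z) (dψ₂c z)]
    rw [show wd (fun u => conj (ψ₁ u)) z = conj (wdb ψ₁ z) from congrFun F3fun z]
    rw [wd_conj (dψ₂ z), hD₁ z, hD₂ z]
    simp only [map_mul, map_neg, Complex.conj_ofReal]
    ring
  -- derivative of H
  have hne : ∀ᶠ w in nhds z, q w ≠ 0 := hqcont.continuousAt.eventually_ne hqz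
  have hHfun : (fun w => ((H w : ℝ) : ℂ)) = fun w => ((p w : ℝ) : ℂ) / ((q w : ℝ) : ℂ) := by
    funext w; rw [hH w, Complex.ofReal_div]
  have hHdiff : DifferentiableAt ℝ (fun w => ((H w : ℝ) : ℂ)) z := by
    rw [hHfun]
    simp only [div_eq_mul_inv]
    exact (dPc z).mul ((dQc z).inv (Complex.ofReal_ne_zero.mpr hqz))
  have hPH : (fun w => ((p w : ℝ) : ℂ))
      =ᶠ[nhds z] fun w => ((H w : ℝ) : ℂ) * ((q w : ℝ) : ℂ) := by
    filter_upwards [hne] with w hw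
    rw [← Complex.ofReal_mul, hH w, div_mul_cancel₀ _ hw]
  have e3 : wd (fun u => ((p u : ℝ) : ℂ)) z
      = wd (fun w => ((H w : ℝ) : ℂ)) z * ((q z : ℝ) : ℂ)
        + ((H z : ℝ) : ℂ) * wd (fun u => ((q u : ℝ) : ℂ)) z := by
    rw [wd_congr hPH, wd_mul hHdiff (dQc z)]
  have e4 : ((H z : ℝ) : ℂ) * ((q z : ℝ) : ℂ) = ((p z : ℝ) : ℂ) := by
    rw [← Complex.ofReal_mul, hH z, div_mul_cancel₀ _ hqz]
  have e5 : ((q z : ℝ) : ℂ) = ψ₁ z * conj (ψ₁ z) + ψ₂ z * conj (ψ₂ z) := congrFun hQceq z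
  -- expand wdb Q z
  have hQfun : Q = fun w => 2 * (ψ₂ w * wd (fun u => conj (ψ₁ u)) w -
      conj (ψ₁ w) * wd ψ₂ w) := funext hQdef
  have dprod1 : DifferentiableAt ℝ (fun w => ψ₂ w * wd (fun u => conj (ψ₁ u)) w) z :=
    ((hψ₂.mul hwdψ₁c).differentiable (by simp)) z
  have dprod2 : DifferentiableAt ℝ (fun w => conj (ψ₁ w) * wd ψ₂ w) z :=
    ((hψ₁c.mul hwdψ₂).differentiable (by simp)) z
  have e1 : wdb Q z = 2 * (wdb (fun w => ψ₂ w * wd (fun u => conj (ψ₁ u)) w) z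
      - wdb (fun w => conj (ψ₁ w) * wd ψ₂ w) z) := by
    rw [hQfun, wdb_const_mul 2 (dprod1.fun_sub dprod2), wdb_sub dprod1 dprod2]
  have eA : wdb (fun w => ψ₂ w * wd (fun u => conj (ψ₁ u)) w) z
      = wdb ψ₂ z * wd (fun u => conj (ψ₁ u)) z
        + ψ₂ z * wdb (wd (fun u => conj (ψ₁ u))) z :=
    wdb_mul (dψ₂ z) ((hwdψ₁c.differentiable (by simp)) z)
  have eB : wdb (fun w => conj (ψ₁ w) * wd ψ₂ w) z
      = wdb (fun u => conj (ψ₁ u)) z * wd ψ₂ z + conj (ψ₁ z) * wdb (wd ψ₂) z :=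
    wdb_mul ((hψ₁c.differentiable (by simp)) z) ((hwdψ₂.differentiable (by simp)) z)
  rw [e1, eA, eB, h1, h2, h3, hD₂ z,
    show wd (fun u => conj (ψ₁ u)) z = conj (wdb ψ₁ z) from congrFun F3fun z]
  linear_combination (-2 * wd (fun u => ((p u : ℝ) : ℂ)) z) * e5 + (2 * ((q z : ℝ) : ℂ)) * e3
    + (2 * wd (fun u => ((q u : ℝ) : ℂ)) z) * e4 + (2 * ((p z : ℝ) : ℂ)) * hwq
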